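/- For each n ∈ ℕ let A_n be a unital C*-algebra and a_n ∈ A_n a self-adjoint element; let A be a unital C*-algebra and a ∈ A a self-adjoint element. Assume that for every polynomial p with real coefficients, ‖p(a_n)‖ → ‖p(a)‖ as n → ∞. Then for every ε > 0 there exists N such that for all n ≥ N, for every x ∈ σ(a) there exists y ∈ σ(a_n) with |x − y| < ε; i.e., eventually σ(a) is contained in the open ε-neighborhood of σ(a_n). -/

import Mathlib

open Filter Polynomial

/-!
Fix `t ∈ σ(b)` and a tent function peaked at `t` and vanishing outside `(t - ε, t + ε)`; by
Weierstrass it is approximated within `1/2` by a polynomial `q` on an interval containing all the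
spectra involved (the norms `‖a n‖ → ‖b‖` are eventually bounded). Then `‖q(b)‖ ≥ |q(t)| > 1/2`,
so eventually `‖q(a n)‖ > 1/2`; since `‖q(a n)‖ = sup |q|` on `σ(a n)`, the spectrum `σ(a n)`
must come within `ε` of `t`. Compactness of `σ(b)` makes this uniform in `t`.
-/

theorem IsCompact.eventually_forall_exists_dist_lt {X ι : Type*} [PseudoMetricSpace X]
    {K : Set X} (hK : IsCompact K) {l : Filter ι} {S : ι → Set X}
    (h : ∀ x ∈ K, ∀ ε > 0, ∀ᶠ i in l, ∃ y ∈ S i, dist x y < ε) {ε : ℝ} (hε : 0 < ε) :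
    ∀ᶠ i in l, ∀ x ∈ K, ∃ y ∈ S i, dist x y < ε := by
  obtain ⟨T, hTK, hKT⟩ :=
    hK.elim_nhds_subcover (Metric.ball · (ε / 2)) fun x _ ↦ Metric.ball_mem_nhds x (by positivity)
  have hT : ∀ᶠ i in l, ∀ t ∈ T, ∃ y ∈ S i, dist t y < ε / 2 :=
    (eventually_all_finset T).mpr fun t ht ↦ h t (hTK t ht) (ε / 2) (by positivity)
  filter_upwards [hT] with i hi x hx
  obtain ⟨t, ht, hxt⟩ := Set.mem_iUnion₂.mp (hKT hx)
  obtain ⟨y, hy, hty⟩ := hi t ht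
  exact ⟨y, hy, by linarith [dist_triangle x t y, Metric.mem_ball.mp hxt]⟩

theorem Polynomial.exists_half_peak_on_Icc {u v t ε : ℝ} (ht : t ∈ Set.Icc u v) (hε : 0 < ε) :
    ∃ q : ℝ[X], 1 / 2 < q.eval t ∧ ∀ y ∈ Set.Icc u v, ε ≤ |y - t| → |q.eval y| < 1 / 2 := by
  obtain ⟨q, hq⟩ := exists_polynomial_near_of_continuousOn u v (fun y ↦ max 0 (1 - |y - t| / ε))
    (by fun_prop) (1 / 2) (by norm_num)
  refine ⟨q, ?_, fun y hy hfar ↦ ?_⟩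
  · have := hq t ht
    simp only [sub_self, abs_zero, zero_div, sub_zero, max_eq_right zero_le_one] at this
    linarith [neg_abs_le (q.eval t - 1)]
  · have htent : 1 - |y - t| / ε ≤ 0 := by
      rw [sub_nonpos, one_le_div hε]
      exact hfar
    simpa [max_eq_left htent] using hq y hy

theorem spectrum.abs_le_norm_of_mem {A : Type*} [CStarAlgebra A] {a : A} {t : ℝ}
    (ht : t ∈ spectrum ℝ a) : |t| ≤ ‖a‖ := by
  obtain hA | hA := subsingleton_or_nontrivial A
  · simp [spectrum.of_subsingleton] at ht
  · exact spectrum.norm_le_norm_of_mem ht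

theorem IsSelfAdjoint.norm_aeval_le {A : Type*} [CStarAlgebra A] {a : A} (ha : IsSelfAdjoint a)
    {q : ℝ[X]} {c : ℝ} (hc : 0 ≤ c) (hq : ∀ y ∈ spectrum ℝ a, |q.eval y| ≤ c) :
    ‖aeval a q‖ ≤ c := by
  rw [← cfc_polynomial q a]
  exact norm_cfc_le hc hq

theorem eventually_exists_mem_spectrum_dist_lt {ι : Type*} {l : Filter ι}
    {A : ι → Type*} [∀ i, CStarAlgebra (A i)] {B : Type*} [CStarAlgebra B]
    {a : ∀ i, A i} {b : B} (ha : ∀ i, IsSelfAdjoint (a i))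
    (h : ∀ p : ℝ[X], Tendsto (fun i ↦ ‖aeval (a i) p‖) l (nhds ‖aeval b p‖))
    {t : ℝ} (ht : t ∈ spectrum ℝ b) {ε : ℝ} (hε : 0 < ε) :
    ∀ᶠ i in l, ∃ y ∈ spectrum ℝ (a i), dist t y < ε := by
  set R := ‖b‖ + 1
  have hbound : ∀ᶠ i in l, ‖a i‖ ≤ R :=
    (by simpa using h X : Tendsto (‖a ·‖) l _).eventually_le_const (by linarith)
  have htR : t ∈ Set.Icc (-R) R :=
    abs_le.mp (by linarith [spectrum.abs_le_norm_of_mem ht])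
  obtain ⟨q, hqt, hqfar⟩ := exists_half_peak_on_Icc htR hε
  have hlarge : ∀ᶠ i in l, 1 / 2 < ‖aeval (a i) q‖ :=
    (h q).eventually_const_lt <| hqt.trans_le <| (le_abs_self _).trans <|
      spectrum.abs_le_norm_of_mem (spectrum.subset_polynomial_aeval b q ⟨t, ht, rfl⟩)
  filter_upwards [hlarge, hbound] with i hi hiR
  by_contra! hfar
  refine hi.not_ge ((ha i).norm_aeval_le (by norm_num) fun y hy ↦ (hqfar y ?_ ?_).le)
  · exact abs_le.mp ((spectrum.abs_le_norm_of_mem hy).trans hiR)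
  · simpa [Real.dist_eq, abs_sub_comm] using hfar y hy

theorem spectrum_eventually_lower_approx_general
    (A : ℕ → Type*) [∀ n, CStarAlgebra (A n)]
    (B : Type*) [CStarAlgebra B]
    (a : ∀ n, A n) (b : B)
    (ha : ∀ n, IsSelfAdjoint (a n))
    (h : ∀ p : Polynomial ℝ,
      Tendsto (fun n => ‖(Polynomial.aeval (a n) p : A n)‖) atTop
        (nhds ‖(Polynomial.aeval b p : B)‖)) :
    ∀ ε : ℝ, 0 < ε → ∃ N : ℕ, ∀ n ≥ N,
      ∀ x ∈ spectrum ℝ b, ∃ y ∈ spectrum ℝ (a n), |x - y| < ε := by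
  intro ε hε
  have hnear := (spectrum.isCompact b).eventually_forall_exists_dist_lt
    (S := (spectrum ℝ <| a ·))
    (fun _ ht _ hδ ↦ eventually_exists_mem_spectrum_dist_lt ha h ht hδ) hε
  simpa only [Real.dist_eq] using eventually_atTop.mp hnear

/-- If the norms of real-polynomial evaluations at self-adjoint elements `a n` converge to
those at `a`, then eventually the spectrum of `a` is contained in the open ε-neighborhood of
the spectrum of `a n`. -/
theorem spectrum_eventually_lower_approx
    (A : ℕ → Type*) [∀ n, CStarAlgebra (A n)]
    (B : Type*) [CStarAlgebra B]
    (a : ∀ n, A n) (b : B)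
    (ha : ∀ n, IsSelfAdjoint (a n)) (hb : IsSelfAdjoint b)
    (h : ∀ p : Polynomial ℝ,
      Tendsto (fun n => ‖(Polynomial.aeval (a n) p : A n)‖) atTop
        (nhds ‖(Polynomial.aeval b p : B)‖)) :
    ∀ ε : ℝ, 0 < ε → ∃ N : ℕ, ∀ n ≥ N,
      ∀ x ∈ spectrum ℝ b, ∃ y ∈ spectrum ℝ (a n), |x - y| < ε :=
  spectrum_eventually_lower_approx_general A B a b ha h
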